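/- arXiv:1208.4716 — 5 statements merged into one kernel-verified Lean document; each statement's English description precedes it below -/
import Mathlib

section
/- For a finite irreducible Markov chain with transition matrix P, stationary distribution π, and mean first passage times m_{ij} (with m_{ii} the mean recurrence time of state i), the quantity K_i = Σ_j π_j m_{ij} does not depend on i. -/
open Matrix BigOperators

/-- `P` is a (row) stochastic matrix. -/
def IsStochastic {m : ℕ} (P : Matrix (Fin m) (Fin m) ℝ) : Prop :=
  (∀ i j, 0 ≤ P i j) ∧ ∀ i, ∑ j, P i j = 1

/-- `P` is irreducible: any state leads to any other in some positive number of steps. -/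
def IsIrred {m : ℕ} (P : Matrix (Fin m) (Fin m) ℝ) : Prop :=
  ∀ i j, ∃ n : ℕ, 1 ≤ n ∧ 0 < (P ^ n) i j

/-- Powers of a stochastic matrix are stochastic. -/
lemma pow_stochastic {m : ℕ} {P : Matrix (Fin m) (Fin m) ℝ} (hP : IsStochastic P) (n : ℕ) :
    IsStochastic (P ^ n) := by
  induction n with
  | zero =>
    constructor
    · intro i j
      by_cases h : i = j <;> simp [pow_zero, Matrix.one_apply, h]
    · intro i
      simp [pow_zero, Matrix.one_apply]
  | succ n ih =>
    constructor
    · intro i j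
      rw [pow_succ', Matrix.mul_apply]
      exact Finset.sum_nonneg fun l _ => mul_nonneg (hP.1 i l) (ih.1 l j)
    · intro i
      rw [pow_succ']
      calc ∑ j, (P * P ^ n) i j = ∑ j, ∑ l, P i l * (P ^ n) l j := by
            simp [Matrix.mul_apply]
        _ = ∑ l, P i l * ∑ j, (P ^ n) l j := by
            rw [Finset.sum_comm]; simp [Finset.mul_sum]
        _ = 1 := by simp [ih.2, hP.2 i]

/-- In a finite irreducible Markov chain, `K_i = ∑_j π_j m_{ij}` does not depend on `i`. -/
theorem kemeny_constant_indep_of_start {m : ℕ} (hm : 0 < m)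
    (P : Matrix (Fin m) (Fin m) ℝ) (hP : IsStochastic P) (hirr : IsIrred P)
    (π : Fin m → ℝ) (hπpos : ∀ i, 0 < π i)
    (hπ : Matrix.vecMul π P = π) (hπsum : ∑ i, π i = 1)
    (M : Matrix (Fin m) (Fin m) ℝ)
    (hM : ∀ i j, M i j = 1 + ∑ k ∈ Finset.univ.erase j, P i k * M k j) :
    ∀ i i' : Fin m, ∑ j, π j * M i j = ∑ j, π j * M i' j := by
  set K : Fin m → ℝ := fun i => ∑ j, π j * M i j with hK_def
  have hπP : ∀ k, ∑ i, π i * P i k = π k := by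
    intro k
    have := congrFun hπ k
    simpa [Matrix.vecMul, dotProduct] using this
  -- Step 1: π_j * M j j = 1
  have hdiag : ∀ j, π j * M j j = 1 := by
    intro j
    have h1 : ∑ i, π i * M i j = 1 + ∑ k ∈ Finset.univ.erase j, π k * M k j := by
      calc ∑ i, π i * M i j
          = ∑ i, π i * (1 + ∑ k ∈ Finset.univ.erase j, P i k * M k j) := by
            simp_rw [← hM]
        _ = ∑ i, π i + ∑ i, ∑ k ∈ Finset.univ.erase j, π i * (P i k * M k j) := by
            simp_rw [mul_add, mul_one, Finset.mul_sum]
            rw [Finset.sum_add_distrib]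
        _ = 1 + ∑ k ∈ Finset.univ.erase j, (∑ i, π i * P i k) * M k j := by
            rw [hπsum, Finset.sum_comm]
            congr 1
            apply Finset.sum_congr rfl
            intro k _
            rw [Finset.sum_mul]
            apply Finset.sum_congr rfl
            intro i _
            ring
        _ = 1 + ∑ k ∈ Finset.univ.erase j, π k * M k j := by
            simp_rw [hπP]
    have h2 : ∑ i, π i * M i j
        = π j * M j j + ∑ i ∈ Finset.univ.erase j, π i * M i j :=
      (Finset.add_sum_erase Finset.univ (fun i => π i * M i j) (Finset.mem_univ j)).symm
    have := h1.symm.trans h2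
    linarith
  -- Step 2: K is harmonic, K i = ∑ k, P i k * K k
  have hharm : ∀ i, K i = ∑ k, P i k * K k := by
    intro i
    have expand : ∀ j, π j * M i j
        = π j + (∑ k, π j * (P i k * M k j)) - P i j * (π j * M j j) := by
      intro j
      rw [hM i j, mul_add, mul_one]
      have : ∑ k ∈ Finset.univ.erase j, π j * (P i k * M k j)
          = (∑ k, π j * (P i k * M k j)) - π j * (P i j * M j j) := by
        rw [← Finset.add_sum_erase Finset.univ (fun k => π j * (P i k * M k j))
          (Finset.mem_univ j)]
        ring
      rw [Finset.mul_sum, this]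
      ring
    calc K i = ∑ j, (π j + (∑ k, π j * (P i k * M k j)) - P i j * (π j * M j j)) := by
          rw [hK_def]
          exact Finset.sum_congr rfl fun j _ => expand j
      _ = (∑ j, π j) + (∑ j, ∑ k, π j * (P i k * M k j)) - ∑ j, P i j * (π j * M j j) := by
          rw [Finset.sum_sub_distrib, Finset.sum_add_distrib]
      _ = 1 + (∑ k, P i k * K k) - 1 := by
          rw [hπsum]
          congr 1
          · congr 1
            rw [Finset.sum_comm]
            apply Finset.sum_congr rfl
            intro k _
            rw [hK_def, Finset.mul_sum]
            apply Finset.sum_congr rfl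
            intro j _
            ring
          · simp_rw [hdiag, mul_one]
            exact hP.2 i
      _ = ∑ k, P i k * K k := by ring
  -- Step 3: K = P^n K
  have hharmn : ∀ n i, K i = ∑ k, (P ^ n) i k * K k := by
    intro n
    induction n with
    | zero =>
      intro i
      simp [Matrix.one_apply]
    | succ n ih =>
      intro i
      rw [hharm i]
      calc ∑ l, P i l * K l = ∑ l, P i l * ∑ k, (P ^ n) l k * K k := by
            simp_rw [← ih]
        _ = ∑ k, (∑ l, P i l * (P ^ n) l k) * K k := by
            simp_rw [Finset.mul_sum, Finset.sum_mul, mul_assoc]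
            rw [Finset.sum_comm]
        _ = ∑ k, (P ^ (n + 1)) i k * K k := by
            simp_rw [pow_succ', Matrix.mul_apply]
  -- Step 4: maximum principle
  obtain ⟨i0, _, hmax⟩ := Finset.exists_max_image Finset.univ K
    ⟨⟨0, hm⟩, Finset.mem_univ _⟩
  have hconst : ∀ j, K j = K i0 := by
    intro j
    obtain ⟨n, _, hpos⟩ := hirr i0 j
    have hSn := pow_stochastic hP n
    have hzero : ∑ k, (P ^ n) i0 k * (K i0 - K k) = 0 := by
      have : ∑ k, (P ^ n) i0 k * (K i0 - K k)
          = (∑ k, (P ^ n) i0 k) * K i0 - ∑ k, (P ^ n) i0 k * K k := by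
        rw [Finset.sum_mul, ← Finset.sum_sub_distrib]
        apply Finset.sum_congr rfl
        intro k _
        ring
      rw [this, hSn.2 i0, one_mul, ← hharmn n i0]
      ring
    have hterm : (P ^ n) i0 j * (K i0 - K j) = 0 := by
      have := (Finset.sum_eq_zero_iff_of_nonneg
        (fun k _ => mul_nonneg (hSn.1 i0 k)
          (sub_nonneg.mpr (hmax k (Finset.mem_univ k))))).mp hzero j (Finset.mem_univ j)
      exact this
    have := mul_eq_zero.mp hterm
    rcases this with h | h
    · exact absurd h (ne_of_gt hpos)
    · linarith
  intro i i'
  calc K i = K i0 := hconst i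
    _ = K i' := (hconst i').symm
end

section
/- Let P be an irreducible stochastic matrix with stationary vector π, and let t, u be vectors. Then I − P + tuᵀ is nonsingular if and only if πᵀt ≠ 0 and uᵀe ≠ 0. -/
open Matrix BigOperators

/-!
Write `A = I - P`. Since `πᵀ A = 0` and `A e = 0`, the rank-one update `A + t uᵀ` sends `π` (on the
left) to `(πᵀ t) uᵀ` and `e` to `(uᵀ e) t`, so both scalars must be nonzero for it to be invertible.
Conversely, if `(A + t uᵀ) v = 0` then pairing with `π` gives `(πᵀ t)(uᵀ v) = 0`, hence `A v = 0`,
i.e. `P v = v`. By the maximum principle for the irreducible stochastic matrix `P`, `v` is a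
multiple of `e`, and `uᵀ v = 0` with `uᵀ e ≠ 0` forces `v = 0`.
-/

namespace Matrix

section RankOneUpdate

variable {K n : Type*} [Field K] [Fintype n] [DecidableEq n] {A : Matrix n n K} {t u x y : n → K}

theorem dotProduct_ne_zero_of_isUnit_add_vecMulVec_of_vecMul_eq_zero
    (h : IsUnit (A + vecMulVec t u)) (hy : y ≠ 0) (hyA : y ᵥ* A = 0) : y ⬝ᵥ t ≠ 0 := by
  intro hyt
  refine hy ((vecMul_injective_iff_isUnit.2 h) ?_)
  simp [vecMul_add, vecMul_vecMulVec, hyA, hyt]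

theorem dotProduct_ne_zero_of_isUnit_add_vecMulVec_of_mulVec_eq_zero
    (h : IsUnit (A + vecMulVec t u)) (hx : x ≠ 0) (hAx : A *ᵥ x = 0) : u ⬝ᵥ x ≠ 0 := by
  intro hux
  refine hx ((mulVec_injective_iff_isUnit.2 h) ?_)
  simp [add_mulVec, vecMulVec_mulVec, hAx, hux]

theorem isUnit_add_vecMulVec (hyA : y ᵥ* A = 0) (hyt : y ⬝ᵥ t ≠ 0)
    (hker : ∀ v, A *ᵥ v = 0 → ∃ c : K, v = c • x) (hux : u ⬝ᵥ x ≠ 0) :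
    IsUnit (A + vecMulVec t u) := by
  rw [isUnit_iff_isUnit_det, isUnit_iff_ne_zero]
  intro hdet
  obtain ⟨v, hv, hMv⟩ := exists_mulVec_eq_zero_iff.2 hdet
  have huv : u ⬝ᵥ v = 0 := by
    have := congrArg (y ⬝ᵥ ·) hMv
    simp only [dotProduct_mulVec, vecMul_add, hyA, vecMul_vecMulVec, zero_add, smul_dotProduct,
      smul_eq_mul, dotProduct_zero, mul_eq_zero] at this
    exact this.resolve_left hyt
  obtain ⟨c, rfl⟩ := hker v (by simpa [add_mulVec, vecMulVec_mulVec, huv] using hMv)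
  rw [dotProduct_smul, smul_eq_mul, mul_eq_zero] at huv
  exact hv (by simp [huv.resolve_right hux])

theorem isUnit_add_vecMulVec_iff (hx : x ≠ 0) (hy : y ≠ 0) (hAx : A *ᵥ x = 0)
    (hyA : y ᵥ* A = 0) (hker : ∀ v, A *ᵥ v = 0 → ∃ c : K, v = c • x) :
    IsUnit (A + vecMulVec t u) ↔ y ⬝ᵥ t ≠ 0 ∧ u ⬝ᵥ x ≠ 0 :=
  ⟨fun h => ⟨dotProduct_ne_zero_of_isUnit_add_vecMulVec_of_vecMul_eq_zero h hy hyA,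
      dotProduct_ne_zero_of_isUnit_add_vecMulVec_of_mulVec_eq_zero h hx hAx⟩,
    fun h => isUnit_add_vecMulVec hyA h.1 hker h.2⟩

end RankOneUpdate

theorem pow_mulVec_eq_self {R n : Type*} [Semiring R] [Fintype n] [DecidableEq n]
    {P : Matrix n n R} {x : n → R} (hx : P *ᵥ x = x) (k : ℕ) : P ^ k *ᵥ x = x := by
  induction k with
  | zero => simp
  | succ k ih => rw [pow_succ, ← mulVec_mulVec, hx, ih]

theorem eq_of_mulVec_eq_self_of_le {R n : Type*} [Field R] [LinearOrder R]
    [IsStrictOrderedRing R] [Fintype n] [DecidableEq n] {P : Matrix n n R} {x : n → R}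
    (hP : P ∈ rowStochastic R n) (hx : P *ᵥ x = x) {i j : n}
    (hmax : ∀ k, x k ≤ x i) (hij : 0 < P i j) : x j = x i := by
  have hsum : ∑ k, P i k * (x i - x k) = 0 := by
    have hxi := congrFun hx i
    simp only [mulVec, dotProduct] at hxi
    simp only [mul_sub, Finset.sum_sub_distrib, ← Finset.sum_mul,
      sum_row_of_mem_rowStochastic hP i, one_mul, hxi, sub_self]
  have hterm := (Finset.sum_eq_zero_iff_of_nonneg fun k _ =>
    mul_nonneg (nonneg_of_mem_rowStochastic hP) (sub_nonneg.2 (hmax k))).1 hsum j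
    (Finset.mem_univ j)
  rw [mul_eq_zero] at hterm
  linarith [hterm.resolve_left hij.ne']

end Matrix

theorem IsStochastic.mem_rowStochastic {m : ℕ} {P : Matrix (Fin m) (Fin m) ℝ}
    (hP : IsStochastic P) : P ∈ rowStochastic ℝ (Fin m) :=
  mem_rowStochastic_iff_sum.2 hP

theorem IsIrred.eq_of_mulVec_eq_self {m : ℕ} {P : Matrix (Fin m) (Fin m) ℝ} {x : Fin m → ℝ}
    (hirr : IsIrred P) (hP : IsStochastic P) (hx : P *ᵥ x = x) (i j : Fin m) : x i = x j := by
  have : Nonempty (Fin m) := ⟨i⟩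
  obtain ⟨k, hk⟩ := Finite.exists_max x
  have eq_max : ∀ l, x l = x k := fun l => by
    obtain ⟨p, -, hp⟩ := hirr k l
    exact eq_of_mulVec_eq_self_of_le (pow_mem hP.mem_rowStochastic p)
      (pow_mulVec_eq_self hx p) hk hp
  rw [eq_max i, eq_max j]

theorem nonsingular_iff_general {m : ℕ}
    (P : Matrix (Fin m) (Fin m) ℝ) (hP : IsStochastic P) (hirr : IsIrred P)
    (π : Fin m → ℝ)
    (hπ : Matrix.vecMul π P = π) (hπsum : ∑ i, π i = 1)
    (t u : Fin m → ℝ) :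
    IsUnit (1 - P + Matrix.vecMulVec t u) ↔
      (π ⬝ᵥ t ≠ 0 ∧ u ⬝ᵥ (fun _ => (1 : ℝ)) ≠ 0) := by
  have hπ0 : π ≠ 0 := by
    rintro rfl
    simp at hπsum
  obtain ⟨i₀, -⟩ := Function.ne_iff.1 hπ0
  refine isUnit_add_vecMulVec_iff (x := 1) (Function.ne_iff.2 ⟨i₀, one_ne_zero⟩) hπ0 ?_ ?_ ?_
  · rw [sub_mulVec, one_mulVec, one_vecMul_of_mem_rowStochastic hP.mem_rowStochastic, sub_self]
  · rw [vecMul_sub, vecMul_one, hπ, sub_self]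
  · intro v hv
    rw [sub_mulVec, one_mulVec, sub_eq_zero] at hv
    exact ⟨v i₀, funext fun j => by simp [hirr.eq_of_mulVec_eq_self hP hv.symm j i₀]⟩

/-- `I - P + t uᵀ` is nonsingular iff `πᵀ t ≠ 0` and `uᵀ e ≠ 0`. -/
theorem nonsingular_iff {m : ℕ} (hm : 0 < m)
    (P : Matrix (Fin m) (Fin m) ℝ) (hP : IsStochastic P) (hirr : IsIrred P)
    (π : Fin m → ℝ) (hπpos : ∀ i, 0 < π i)
    (hπ : Matrix.vecMul π P = π) (hπsum : ∑ i, π i = 1)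
    (t u : Fin m → ℝ) :
    IsUnit (1 - P + Matrix.vecMulVec t u) ↔
      (π ⬝ᵥ t ≠ 0 ∧ u ⬝ᵥ (fun _ => (1 : ℝ)) ≠ 0) :=
  nonsingular_iff_general P hP hirr π hπ hπsum t u
end

section
/- For an irreducible reversible Markov chain with real eigenvalues 1 = λ₁ > λ₂ ≥ … ≥ λ_m > −1, the sum Σ_{i=2}^m 1/(1−λ_i) is at least (m−1)²/m and at most (m−1)/(1−λ₂). -/
open BigOperators

/-- For an irreducible reversible chain with real eigenvalues
`1 = λ₁ > λ₂ ≥ … ≥ λ_m > -1` with `1 + λ₂ + … + λ_m = 0`, the sum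
`∑_{i=2}^m 1/(1-λ_i)` is at least `(m-1)²/m` and at most `(m-1)/(1-λ₂)`. -/
theorem reversible_eigenvalue_sum_bounds {m : ℕ} (hm : 2 ≤ m)
    (lam : Fin (m - 1) → ℝ)
    (hlt : ∀ i, -1 < lam i ∧ lam i < 1)
    (hmono : ∀ i : Fin (m - 1), lam i ≤ lam ⟨0, by omega⟩)
    (hsum : 1 + ∑ i, lam i = 0) :
    ((m : ℝ) - 1) ^ 2 / m ≤ ∑ i, 1 / (1 - lam i) ∧
      ∑ i, 1 / (1 - lam i) ≤ ((m : ℝ) - 1) / (1 - lam ⟨0, by omega⟩) := by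
  have hpos : ∀ i, (0:ℝ) < 1 - lam i := fun i => by have := (hlt i).2; linarith
  have hcard : ((m - 1 : ℕ) : ℝ) = (m : ℝ) - 1 := by
    have h1 : (1:ℕ) ≤ m := by omega
    push_cast [Nat.cast_sub h1]; ring
  have hsum1 : ∑ i, (1 - lam i) = (m : ℝ) := by
    rw [Finset.sum_sub_distrib]
    simp only [Finset.sum_const, Finset.card_univ, Fintype.card_fin, nsmul_eq_mul, mul_one]
    rw [hcard]; linarith
  constructor
  · have key := Finset.sum_mul_sq_le_sq_mul_sq Finset.univ
      (fun i => Real.sqrt (1 - lam i)) (fun i => 1 / Real.sqrt (1 - lam i))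
    have h1 : ∀ i : Fin (m-1), Real.sqrt (1 - lam i) * (1 / Real.sqrt (1 - lam i)) = 1 := by
      intro i
      rw [mul_one_div, div_self (ne_of_gt (Real.sqrt_pos.mpr (hpos i)))]
    have h2 : ∀ i : Fin (m-1), Real.sqrt (1 - lam i) ^ 2 = 1 - lam i := fun i =>
      Real.sq_sqrt (hpos i).le
    have h3 : ∀ i : Fin (m-1), (1 / Real.sqrt (1 - lam i)) ^ 2 = 1 / (1 - lam i) := by
      intro i
      rw [div_pow, one_pow, Real.sq_sqrt (hpos i).le]
    simp only [h1, h2, h3, Finset.sum_const, Finset.card_univ, Fintype.card_fin,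
      nsmul_eq_mul, mul_one, hsum1, hcard] at key
    have hm0 : (0:ℝ) < m := by positivity
    rw [div_le_iff₀ hm0]
    linarith [key]
  · have h0 := hpos ⟨0, by omega⟩
    calc ∑ i, 1 / (1 - lam i) ≤ ∑ _i : Fin (m-1), 1 / (1 - lam ⟨0, by omega⟩) := by
          apply Finset.sum_le_sum
          intro i _
          exact one_div_le_one_div_of_le h0 (by linarith [hmono i])
      _ = ((m : ℝ) - 1) / (1 - lam ⟨0, by omega⟩) := by
          rw [Finset.sum_const, Finset.card_univ, Fintype.card_fin, nsmul_eq_mul, hcard]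
          ring
end

section
/- For the three-state 'constant movement' chain (p₂+p₃ = q₁+q₃ = r₁+r₂ = 1), Kemeny's constant K = 1 + 3/(3 − q₃r₂ − r₁p₃ − p₂q₁) satisfies 2 ≤ K ≤ 5/2. -/
/-- For the three-state "constant movement" chain (`p₂+p₃ = q₁+q₃ = r₁+r₂ = 1`),
Kemeny's constant `K = 1 + 3/(3 - q₃r₂ - r₁p₃ - p₂q₁)` satisfies `2 ≤ K ≤ 5/2`. -/
theorem three_state_constant_movement_bounds (p₂ p₃ q₁ q₃ r₁ r₂ : ℝ)
    (hp : 0 ≤ p₂) (hp' : 0 ≤ p₃) (hq : 0 ≤ q₁) (hq' : 0 ≤ q₃) (hr : 0 ≤ r₁) (hr' : 0 ≤ r₂)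
    (hps : p₂ + p₃ = 1) (hqs : q₁ + q₃ = 1) (hrs : r₁ + r₂ = 1)
    (hΔ1 : 0 < q₃ * r₁ + q₁ * r₂ + q₁ * r₁)
    (hΔ2 : 0 < r₁ * p₂ + r₂ * p₃ + r₂ * p₂)
    (hΔ3 : 0 < p₂ * q₃ + p₃ * q₁ + p₃ * q₃)
    (K : ℝ) (hK : K = 1 + 3 / (3 - q₃ * r₂ - r₁ * p₃ - p₂ * q₁)) :
    2 ≤ K ∧ K ≤ 5 / 2 := by
  subst hK
  have hS0 : 0 ≤ q₃ * r₂ + r₁ * p₃ + p₂ * q₁ := by positivity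
  have hS1 : q₃ * r₂ + r₁ * p₃ + p₂ * q₁ ≤ 1 := by
    nlinarith [mul_nonneg hq hr, mul_nonneg hp hq', mul_nonneg hp' hr']
  have hD : 3 - q₃ * r₂ - r₁ * p₃ - p₂ * q₁ = 3 - (q₃ * r₂ + r₁ * p₃ + p₂ * q₁) := by ring
  set S := q₃ * r₂ + r₁ * p₃ + p₂ * q₁ with hSdef
  rw [hD]
  have h2 : (2:ℝ) ≤ 3 - S := by linarith
  have h3 : 3 - S ≤ 3 := by linarith
  have hpos : (0:ℝ) < 3 - S := by linarith
  constructor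
  · have : (1:ℝ) ≤ 3 / (3 - S) := by
      rw [le_div_iff₀ hpos]; linarith
    linarith
  · have : 3 / (3 - S) ≤ 3 / 2 := by
      rw [div_le_div_iff₀ hpos (by norm_num)]; linarith
    linarith
end

section
/- For a rank-one (Type 2) perturbation P̄ = P + e hᵀ of an irreducible stochastic matrix P such that P̄ is also irreducible and stochastic, Kemeny's constant is unchanged: K(P̄) = K(P). -/
open Matrix BigOperators

lemma pow_stoch {m : ℕ} {P : Matrix (Fin m) (Fin m) ℝ} (hP : IsStochastic P) (n : ℕ) :
    (∀ i j, 0 ≤ (P ^ n) i j) ∧ ∀ i, ∑ j, (P ^ n) i j = 1 := by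
  induction n with
  | zero =>
    constructor
    · intro i j; simp [Matrix.one_apply]; positivity
    · intro i; simp [Matrix.one_apply]
  | succ n ih =>
    rw [pow_succ]
    constructor
    · intro i j
      rw [Matrix.mul_apply]
      exact Finset.sum_nonneg fun k _ => mul_nonneg (ih.1 i k) (hP.1 k j)
    · intro i
      simp only [Matrix.mul_apply]
      rw [Finset.sum_comm]
      calc ∑ k, ∑ j, (P ^ n) i k * P k j = ∑ k, (P ^ n) i k * ∑ j, P k j := by
            simp [Finset.mul_sum]
        _ = 1 := by simp [hP.2, ih.2 i]

lemma fixed_const {m : ℕ} (hm : 0 < m) {P : Matrix (Fin m) (Fin m) ℝ}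
    (hP : IsStochastic P) (hirr : IsIrred P) {x : Fin m → ℝ}
    (hx : P.mulVec x = x) : ∃ c, x = fun _ => c := by
  haveI : Nonempty (Fin m) := ⟨⟨0, hm⟩⟩
  have hpow : ∀ n : ℕ, (P ^ n).mulVec x = x := by
    intro n
    induction n with
    | zero => simp
    | succ n ih => rw [pow_succ', ← Matrix.mulVec_mulVec, ih, hx]
  obtain ⟨i0, -, hi0⟩ := Finset.exists_max_image Finset.univ x ⟨Classical.arbitrary _, Finset.mem_univ _⟩
  refine ⟨x i0, funext fun j => ?_⟩
  obtain ⟨n, -, hn⟩ := hirr i0 j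
  have hsum : ∑ k, (P ^ n) i0 k * (x i0 - x k) = 0 := by
    have h1 := (pow_stoch hP n).2 i0
    have h2 : ∑ k, (P ^ n) i0 k * x k = x i0 := by
      have := congrFun (hpow n) i0
      simpa [Matrix.mulVec, dotProduct] using this
    simp [mul_sub, Finset.sum_sub_distrib, ← Finset.sum_mul, h1, h2]
  have hterm : ∀ k ∈ Finset.univ, (0:ℝ) ≤ (P ^ n) i0 k * (x i0 - x k) := fun k _ =>
    mul_nonneg ((pow_stoch hP n).1 i0 k) (sub_nonneg.2 (hi0 k (Finset.mem_univ k)))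
  have := (Finset.sum_eq_zero_iff_of_nonneg hterm).1 hsum j (Finset.mem_univ j)
  rcases mul_eq_zero.1 this with h | h
  · exact absurd h (ne_of_gt hn)
  · linarith [sub_eq_zero.1 h]

lemma fund_unit {m : ℕ} (hm : 0 < m) {P : Matrix (Fin m) (Fin m) ℝ}
    (hP : IsStochastic P) (hirr : IsIrred P) {π : Fin m → ℝ}
    (hπ : Matrix.vecMul π P = π) (hπsum : ∑ i, π i = 1) :
    IsUnit (1 - P + Matrix.vecMulVec (fun _ => (1:ℝ)) π) := by
  set A := 1 - P + Matrix.vecMulVec (fun _ => (1:ℝ)) π with hA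
  rw [← Matrix.mulVec_injective_iff_isUnit]
  intro x y hxy
  have key : ∀ z : Fin m → ℝ, A.mulVec z = 0 → z = 0 := by
    intro z hz
    have hπA : Matrix.vecMul π A = π := by
      rw [hA, Matrix.vecMul_add, Matrix.vecMul_sub, Matrix.vecMul_one, hπ]
      funext j
      simp only [Pi.add_apply, Pi.sub_apply, Matrix.vecMul, dotProduct,
        Matrix.vecMulVec_apply]
      rw [show ∑ i, π i * ((fun _ => (1:ℝ)) i * π j) = (∑ i, π i) * π j by
        rw [Finset.sum_mul]; congr 1; funext i; ring, hπsum]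
      ring
    have hdot : dotProduct π z = 0 := by
      have := congrArg (dotProduct π) hz
      rwa [Matrix.dotProduct_mulVec, hπA, dotProduct_zero] at this
    have hPz : P.mulVec z = z := by
      have hexp : A.mulVec z = z - P.mulVec z := by
        rw [hA, Matrix.add_mulVec, Matrix.sub_mulVec, Matrix.one_mulVec]
        have hvz : (Matrix.vecMulVec (fun _ => (1:ℝ)) π).mulVec z = (0 : Fin m → ℝ) := by
          funext i
          simp only [Matrix.mulVec, dotProduct, Matrix.vecMulVec_apply, Pi.zero_apply]
          rw [show ∑ j, (fun _ => (1:ℝ)) i * π j * z j = dotProduct π z by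
            simp [dotProduct]]
          exact hdot
        rw [hvz, add_zero]
      rw [hz] at hexp
      have := hexp.symm
      rw [sub_eq_zero] at this; exact this.symm
    obtain ⟨c, rfl⟩ := fixed_const hm hP hirr hPz
    have : c = 0 := by
      have : dotProduct π (fun _ => c) = c := by
        simp [dotProduct, ← Finset.sum_mul, hπsum]
      rw [this] at hdot; exact hdot
    funext i; simp [this]
  have : A.mulVec (x - y) = 0 := by rw [Matrix.mulVec_sub, hxy, sub_self]
  have := key _ this
  funext i
  have := congrFun this i
  simpa [sub_eq_zero] using this

/-- A Type 2 (rank-one, `e hᵀ`) perturbation leaves Kemeny's constant unchanged: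
`K(P̄) = K(P)`, where `K(·) = tr((I - · + e ·πᵀ)⁻¹)`. -/
theorem type2_perturbation_kemeny {m : ℕ} (hm : 0 < m)
    (P : Matrix (Fin m) (Fin m) ℝ) (hP : IsStochastic P) (hirr : IsIrred P)
    (h : Fin m → ℝ) (hh : ∑ i, h i = 0)
    (Pbar : Matrix (Fin m) (Fin m) ℝ)
    (hPbar : Pbar = P + Matrix.vecMulVec (fun _ => (1 : ℝ)) h)
    (hPb : IsStochastic Pbar) (hirrb : IsIrred Pbar)
    (π πbar : Fin m → ℝ)
    (hπpos : ∀ i, 0 < π i) (hπ : Matrix.vecMul π P = π) (hπsum : ∑ i, π i = 1)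
    (hπbpos : ∀ i, 0 < πbar i) (hπb : Matrix.vecMul πbar Pbar = πbar)
    (hπbsum : ∑ i, πbar i = 1) :
    Matrix.trace ((1 - Pbar + Matrix.vecMulVec (fun _ => (1 : ℝ)) πbar)⁻¹)
      = Matrix.trace ((1 - P + Matrix.vecMulVec (fun _ => (1 : ℝ)) π)⁻¹) := by
  set A := 1 - P + Matrix.vecMulVec (fun _ => (1:ℝ)) π with hAdef
  set Abar := 1 - Pbar + Matrix.vecMulVec (fun _ => (1:ℝ)) πbar with hAbardef
  set v : Fin m → ℝ := fun i => πbar i - π i - h i with hvdef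
  set E := Matrix.vecMulVec (fun _ => (1:ℝ)) v with hEdef
  have hvsum : ∑ i, v i = 0 := by
    simp [hvdef, Finset.sum_sub_distrib, hπsum, hπbsum, hh]
  -- row sums of A are 1
  have hArow : ∀ i, ∑ j, A i j = 1 := by
    intro i
    simp only [hAdef, Matrix.add_apply, Matrix.sub_apply, Matrix.vecMulVec_apply]
    rw [Finset.sum_add_distrib, Finset.sum_sub_distrib]
    simp [Finset.sum_ite_eq', Matrix.one_apply, hP.2 i, hπsum]
  -- Abar = A + E
  have hAbar : Abar = A + E := by
    funext i j
    simp only [hAbardef, hAdef, hEdef, hPbar, Matrix.add_apply, Matrix.sub_apply,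
      Matrix.vecMulVec_apply, hvdef]
    ring
  -- A * E = E
  have hAE : A * E = E := by
    funext i j
    simp only [Matrix.mul_apply, hEdef, Matrix.vecMulVec_apply, one_mul]
    rw [← Finset.sum_mul, hArow i, one_mul]
  -- E * E = 0
  have hEE : E * E = 0 := by
    funext i j
    simp only [Matrix.mul_apply, hEdef, Matrix.vecMulVec_apply, one_mul, Matrix.zero_apply]
    rw [← Finset.sum_mul, hvsum, zero_mul]
  have hfact : Abar = A * (1 + E) := by
    rw [mul_add, mul_one, hAE, hAbar]
  have honeE : (1 + E) * (1 - E) = 1 := by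
    have h1 : (1 + E) * (1 - E) = 1 - E * E := by noncomm_ring
    rw [h1, hEE, sub_zero]
  have hAunit : IsUnit A := fund_unit hm hP hirr hπ hπsum
  have hEinv : (1 + E)⁻¹ = 1 - E := Matrix.inv_eq_right_inv honeE
  have hAbarinv : Abar⁻¹ = (1 - E) * A⁻¹ := by
    rw [hfact, Matrix.mul_inv_rev, hEinv]
  -- row sums of A⁻¹ are 1
  have hAe : A.mulVec (fun _ => (1:ℝ)) = fun _ => (1:ℝ) := by
    funext i
    simp only [Matrix.mulVec, dotProduct, mul_one]
    exact hArow i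
  have hAinvrow : ∀ k, ∑ i, A⁻¹ k i = 1 := by
    intro k
    have h1 : A⁻¹.mulVec (fun _ => (1:ℝ)) = fun _ => (1:ℝ) := by
      have := congrArg (A⁻¹.mulVec) hAe
      rw [Matrix.mulVec_mulVec, Matrix.nonsing_inv_mul A ((Matrix.isUnit_iff_isUnit_det A).1 hAunit), Matrix.one_mulVec] at this
      exact this.symm
    have := congrFun h1 k
    simpa [Matrix.mulVec, dotProduct] using this
  have htrE : Matrix.trace (E * A⁻¹) = 0 := by
    rw [Matrix.trace]
    simp only [Matrix.diag_apply, Matrix.mul_apply, hEdef, Matrix.vecMulVec_apply, one_mul]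
    rw [Finset.sum_comm]
    calc ∑ k, ∑ i, v k * A⁻¹ k i = ∑ k, v k * ∑ i, A⁻¹ k i := by simp [Finset.mul_sum]
      _ = ∑ k, v k := by simp [hAinvrow]
      _ = 0 := hvsum
  rw [hAbarinv, sub_mul, one_mul, Matrix.trace_sub, htrE, sub_zero]
end
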